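/- arXiv:1905.08462 — 6 statements merged into one kernel-verified Lean document; each statement's English description precedes it below -/
import Mathlib

section
/- Let n = 2·3^p − 1 for an integer p ≥ 0. Then n is odd and 3n + 1 = 2·(3^{p+1} − 1). If p is even, then v₂(3n + 1) = 2 and C(n) = (3^{p+1} − 1)/2; if p is odd, then v₂(3n + 1) = v₂(p + 1) + 3 ≥ 4 (in particular greater than 2). -/
/-!
Since `3 * (2 * 3 ^ p - 1) + 1 = 2 * (3 ^ (p + 1) - 1)`, everything reduces to the 2-adic
valuation of `3 ^ n - 1` for `n = p + 1`. For odd `n`, `3 ^ n ≡ 3 [MOD 4]`, so the valuation is `1`;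
for even `n`, lifting the exponent gives `v₂(3 + 1) + v₂(3 - 1) + v₂(n) - 1 = v₂(n) + 2`.
-/

/-- The Collatz operation on odd positive integers:
`C n = (3n+1)/2^{v₂(3n+1)}`. -/
def collatzC (n : ℕ) : ℕ := (3 * n + 1) / 2 ^ padicValNat 2 (3 * n + 1)

lemma padicValNat_two_eq_one_of_mod_four_eq_two {m : ℕ} (hm : m % 4 = 2) :
    padicValNat 2 m = 1 := by
  obtain ⟨k, rfl⟩ : 2 ∣ m := by omega
  have hk : ¬2 ∣ k := by omega
  rw [padicValNat_base_mul one_lt_two (by omega), padicValNat.eq_zero_of_not_dvd hk]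

lemma three_pow_mod_four_of_odd {n : ℕ} (hn : Odd n) : 3 ^ n % 4 = 3 := by
  obtain ⟨k, rfl⟩ := hn
  rw [pow_succ, pow_mul, Nat.mul_mod, Nat.pow_mod]
  norm_num

lemma padicValNat_two_three_pow_sub_one_of_odd {n : ℕ} (hn : Odd n) :
    padicValNat 2 (3 ^ n - 1) = 1 := by
  apply padicValNat_two_eq_one_of_mod_four_eq_two
  have := three_pow_mod_four_of_odd hn
  generalize 3 ^ n = x at this ⊢ -- `omega` fails on the goal with the literal power `3 ^ n`
  omega

lemma padicValNat_two_three_pow_sub_one_of_even {n : ℕ} (hn : Even n) (hn₀ : n ≠ 0) :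
    padicValNat 2 (3 ^ n - 1) = padicValNat 2 n + 2 := by
  have lte := padicValNat.pow_two_sub_pow (x := 3) (y := 1) (by norm_num) (by norm_num)
    (by norm_num) hn₀ hn
  have h₄ : padicValNat 2 (3 + 1) = 2 := padicValNat.prime_pow (p := 2) 2
  have h₂ : padicValNat 2 (3 - 1) = 1 := padicValNat.self one_lt_two
  rw [one_pow, h₄, h₂] at lte
  omega

lemma three_mul_two_mul_three_pow_sub_one_add_one (p : ℕ) :
    3 * (2 * 3 ^ p - 1) + 1 = 2 * (3 ^ (p + 1) - 1) := by
  have := Nat.one_le_pow p 3 three_pos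
  rw [pow_succ]
  omega

theorem collatz_of_two_mul_three_pow (p : ℕ) :
    Odd (2 * 3 ^ p - 1) ∧
    3 * (2 * 3 ^ p - 1) + 1 = 2 * (3 ^ (p + 1) - 1) ∧
    (Even p →
      padicValNat 2 (3 * (2 * 3 ^ p - 1) + 1) = 2 ∧
      collatzC (2 * 3 ^ p - 1) = (3 ^ (p + 1) - 1) / 2) ∧
    (Odd p →
      padicValNat 2 (3 * (2 * 3 ^ p - 1) + 1) = padicValNat 2 (p + 1) + 3 ∧
      4 ≤ padicValNat 2 (p + 1) + 3) := by
  have hodd : Odd (2 * 3 ^ p - 1) := ⟨3 ^ p - 1, by have := Nat.one_le_pow p 3 three_pos; omega⟩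
  have key := three_mul_two_mul_three_pow_sub_one_add_one p
  have hval : padicValNat 2 (2 * (3 ^ (p + 1) - 1)) = padicValNat 2 (3 ^ (p + 1) - 1) + 1 :=
    padicValNat_base_mul one_lt_two
      (Nat.sub_ne_zero_of_lt (Nat.one_lt_pow p.succ_ne_zero (by norm_num)))
  refine ⟨hodd, key, fun hp => ?_, fun hp => ?_⟩
  · have hv : padicValNat 2 (3 * (2 * 3 ^ p - 1) + 1) = 2 := by
      rw [key, hval, padicValNat_two_three_pow_sub_one_of_odd hp.add_one]
    refine ⟨hv, ?_⟩
    rw [collatzC, hv, key, pow_two, Nat.mul_div_mul_left _ _ two_pos]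
  · have hv₁ : 1 ≤ padicValNat 2 (p + 1) :=
      one_le_padicValNat_of_dvd p.succ_ne_zero (even_iff_two_dvd.mp hp.add_one)
    rw [key, hval, padicValNat_two_three_pow_sub_one_of_even hp.add_one p.succ_ne_zero]
    omega
end

section
/- Let p ≥ 0 be an even integer and n = 2·3^p − 1. Then C(n) = (3^{p+1} − 1)/2, and 3·C(n) + 1 = (3^{p+2} − 1)/2 with v₂(3·C(n) + 1) = v₂(p + 2) + 1 ≥ 2; consequently C(C(n)) = (3^{p+2} − 1)/2^{v₂(p+2)+2}. -/
theorem collatz_twice_of_two_mul_three_pow (p : ℕ) (hp : Even p) :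
    collatzC (2 * 3 ^ p - 1) = (3 ^ (p + 1) - 1) / 2 ∧
    3 * collatzC (2 * 3 ^ p - 1) + 1 = (3 ^ (p + 2) - 1) / 2 ∧
    padicValNat 2 (3 * collatzC (2 * 3 ^ p - 1) + 1) = padicValNat 2 (p + 2) + 1 ∧
    2 ≤ padicValNat 2 (p + 2) + 1 ∧
    collatzC (collatzC (2 * 3 ^ p - 1)) =
      (3 ^ (p + 2) - 1) / 2 ^ (padicValNat 2 (p + 2) + 2) := by
  obtain ⟨j, rfl⟩ := hp
  set q := j + j with hq
  -- basic arithmetic facts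
  have ha : 3 ^ q = 9 ^ j := by rw [hq, ← two_mul, pow_mul]; norm_num
  have h9 : 9 ^ j % 4 = 1 := by rw [Nat.pow_mod]; simp
  have hpos : 1 ≤ 9 ^ j := Nat.one_le_pow _ _ (by norm_num)
  -- t is the odd part candidate
  set a := 9 ^ j with hadef
  set t := 6 * (a / 4) + 1 with htdef
  have ha4 : a = 4 * (a / 4) + 1 := by omega
  have hb : 3 ^ (q + 1) = 3 * a := by rw [pow_succ, ha]; ring
  have hc : 3 ^ (q + 2) = 9 * a := by rw [pow_add, ha]; ring
  have htodd : ¬ 2 ∣ t := by omega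
  -- 3n+1 = 2 * (2t),  3^(q+1)-1 = 2t
  have h2t : 3 ^ (q + 1) - 1 = 2 * t := by rw [hb]; omega
  have hm : 3 * (2 * 3 ^ q - 1) + 1 = 4 * t := by
    have : 3 ^ q = a := ha
    omega
  have two_prime : Fact (Nat.Prime 2) := ⟨Nat.prime_two⟩
  have hv2 : padicValNat 2 (4 * t) = 2 := by
    have : (4 * t : ℕ) = 2 ^ 2 * t := by ring
    rw [this, padicValNat.mul (by positivity) (by omega), padicValNat.prime_pow,
      padicValNat.eq_zero_of_not_dvd htodd]
  -- first claim: collatzC n = t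
  have hC1 : collatzC (2 * 3 ^ q - 1) = t := by
    rw [collatzC, hm, hv2]
    omega
  have hC1' : (3 ^ (q + 1) - 1) / 2 = t := by omega
  -- 3t+1
  have h3t : 3 ^ (q + 2) - 1 = 2 * (3 * t + 1) := by
    have := hc; omega
  have hC2 : 3 * t + 1 = (3 ^ (q + 2) - 1) / 2 := by omega
  -- LTE
  have hlte : padicValNat 2 (3 ^ (q + 2) - 1) + 1 =
      padicValNat 2 (3 + 1) + padicValNat 2 (3 - 1) + padicValNat 2 (q + 2) := by
    have := padicValNat.pow_two_sub_pow (x := 3) (y := 1) (n := q + 2)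
      (by norm_num) (by norm_num) (by norm_num) (by omega) (by exact ⟨j + 1, by omega⟩)
    simpa using this
  have h41 : padicValNat 2 (3 + 1) = 2 := by
    have : (3 + 1 : ℕ) = 2 ^ 2 := rfl
    rw [this, padicValNat.prime_pow]
  have h21 : padicValNat 2 (3 - 1) = 1 := by
    have : (3 - 1 : ℕ) = 2 ^ 1 := rfl
    rw [this, padicValNat.prime_pow]
  have hlte' : padicValNat 2 (3 ^ (q + 2) - 1) = padicValNat 2 (q + 2) + 2 := by
    rw [h41, h21] at hlte; omega
  have hsplit : padicValNat 2 (2 * (3 * t + 1)) =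
      1 + padicValNat 2 (3 * t + 1) := by
    rw [padicValNat.mul (by norm_num) (by omega)]
    simp [padicValNat.self]
  have hv3 : padicValNat 2 (3 * t + 1) = padicValNat 2 (q + 2) + 1 := by
    have := hlte'; rw [h3t, hsplit] at this; omega
  have hvge : 2 ≤ padicValNat 2 (q + 2) + 1 := by
    have : 1 ≤ padicValNat 2 (q + 2) :=
      one_le_padicValNat_of_dvd (by omega) (by omega)
    omega
  -- final claim
  have hC3 : collatzC t = (3 ^ (q + 2) - 1) / 2 ^ (padicValNat 2 (q + 2) + 2) := by
    rw [collatzC, hv3, h3t]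
    have h2p : 2 ^ (padicValNat 2 (q + 2) + 2) =
        2 * 2 ^ (padicValNat 2 (q + 2) + 1) := by ring
    rw [h2p, Nat.mul_div_mul_left _ _ (by norm_num : 0 < 2)]
  exact ⟨by rw [hC1, hC1'], by rw [hC1, hC2], by rw [hC1, hv3], hvge, by rw [hC1, hC3]⟩
end

section
/- For every even integer p ≥ 0, two Collatz operations applied to 2·3^p − 1 give the same result as the (single) Collatz operation applied to 2·3^{p+1} − 1; that is, C(C(2·3^p − 1)) = C(2·3^{p+1} − 1), both sides being equal to (3^{p+2} − 1)/2^{v₂(3^{p+2}−1)}. -/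
lemma pv_two_pow_mul (j a : ℕ) (ha : a ≠ 0) :
    padicValNat 2 (2 ^ j * a) = j + padicValNat 2 a := by
  rw [padicValNat.mul (by positivity) ha, padicValNat.prime_pow]

lemma div_pv_two_pow_mul (j a : ℕ) (ha : a ≠ 0) :
    (2 ^ j * a) / 2 ^ padicValNat 2 (2 ^ j * a) = a / 2 ^ padicValNat 2 a := by
  rw [pv_two_pow_mul j a ha, pow_add, Nat.mul_div_mul_left _ _ (by positivity)]

theorem collatz_twice_eq_collatz_of_next (p : ℕ) (hp : Even p) :
    collatzC (collatzC (2 * 3 ^ p - 1)) = collatzC (2 * 3 ^ (p + 1) - 1) ∧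
    collatzC (collatzC (2 * 3 ^ p - 1)) =
      (3 ^ (p + 2) - 1) / 2 ^ padicValNat 2 (3 ^ (p + 2) - 1) := by
  obtain ⟨k, hk⟩ := hp
  have h9 : 9 ^ k % 4 = 1 := by
    have : (9:ℕ) ^ k % 4 = (9 % 4) ^ k % 4 := Nat.pow_mod 9 k 4
    simpa using this
  obtain ⟨m, hm⟩ : ∃ m, (9:ℕ) ^ k = 4 * m + 1 := ⟨9 ^ k / 4, by omega⟩
  have hpp : (3:ℕ) ^ p = 4 * m + 1 := by
    rw [hk, ← two_mul, pow_mul]; norm_num [hm]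
  have hp1 : (3:ℕ) ^ (p + 1) = 12 * m + 3 := by rw [pow_succ]; omega
  have hp2 : (3:ℕ) ^ (p + 2) = 36 * m + 9 := by
    rw [show p + 2 = (p + 1) + 1 from rfl, pow_succ]; omega
  set c : ℕ := 6 * m + 1 with hc
  have hvc : padicValNat 2 c = 0 :=
    padicValNat.eq_zero_of_not_dvd (by omega)
  have e1 : 3 * (2 * 3 ^ p - 1) + 1 = 2 ^ 2 * c := by omega
  have hC1 : collatzC (2 * 3 ^ p - 1) = c := by
    unfold collatzC
    rw [e1, pv_two_pow_mul 2 c (by omega), hvc]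
    simp [Nat.mul_div_cancel_left]
  set t : ℕ := 3 * c + 1 with ht
  have htne : t ≠ 0 := by omega
  have e2 : 3 * (2 * 3 ^ (p + 1) - 1) + 1 = 2 ^ 2 * t := by omega
  have e3 : 3 ^ (p + 2) - 1 = 2 ^ 1 * t := by omega
  have hCC : collatzC (collatzC (2 * 3 ^ p - 1)) = t / 2 ^ padicValNat 2 t := by
    rw [hC1]; unfold collatzC; rfl
  refine ⟨?_, ?_⟩
  · rw [hCC]; unfold collatzC; rw [e2, div_pv_two_pow_mul 2 t htne]
  · rw [hCC, e3, div_pv_two_pow_mul 1 t htne]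
end

section
/- For every even integer p ≥ 0, setting r = v₂(p + 2) + 1, one has 2·3^{p+2} − 1 = 2^{r+2} · C(C(2·3^p − 1)) + 1. -/
lemma padic_two_pow_mul_odd (a u : ℕ) (hu : Odd u) :
    padicValNat 2 (2 ^ a * u) = a := by
  have hu0 : u ≠ 0 := by rintro rfl; simp [Nat.odd_iff] at hu
  have h2 : ¬ (2 ∣ u) := by
    rw [Nat.odd_iff] at hu; omega
  haveI : Fact (Nat.Prime 2) := ⟨Nat.prime_two⟩
  rw [padicValNat.mul (by positivity) hu0, padicValNat.prime_pow,
    padicValNat.eq_zero_of_not_dvd h2, add_zero]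

lemma collatz_of_form (n a u : ℕ) (hu : Odd u) (h : 3 * n + 1 = 2 ^ a * u) :
    collatzC n = u := by
  rw [collatzC, h, padic_two_pow_mul_odd a u hu,
    Nat.mul_div_cancel_left _ (by positivity)]

lemma nine_pow_mod_eight (k : ℕ) : ∃ c, 9 ^ k = 8 * c + 1 := by
  induction k with
  | zero => exact ⟨0, rfl⟩
  | succ k ih => obtain ⟨c, hc⟩ := ih; exact ⟨9 * c + 1, by rw [pow_succ, hc]; ring⟩

lemma nine_pow_val (m : ℕ) (hm : 0 < m) :
    ∃ u, Odd u ∧ 9 ^ m = 2 ^ (padicValNat 2 m + 3) * u + 1 := by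
  induction m using Nat.strong_induction_on with
  | _ m ih =>
    rcases Nat.even_or_odd m with he | ho
    · obtain ⟨j, rfl⟩ := he
      have hj : 0 < j := by omega
      obtain ⟨u, hu, h9⟩ := ih j (by omega) hj
      have hv : padicValNat 2 (j + j) = padicValNat 2 j + 1 := by
        haveI : Fact (Nat.Prime 2) := ⟨Nat.prime_two⟩
        have : j + j = 2 * j := by ring
        rw [this, padicValNat.mul (by norm_num) (by omega), padicValNat.self (by norm_num)]
        omega
      set v := padicValNat 2 j with hvdef
      refine ⟨2 ^ (v + 2) * u ^ 2 + u, ?_, ?_⟩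
      · rcases hu with ⟨w, hw⟩
        exact ⟨2 ^ (v + 1) * u ^ 2 + w, by rw [hw]; ring⟩
      · have : 9 ^ (j + j) = (9 ^ j) ^ 2 := by rw [← pow_mul]; ring_nf
        rw [hv, this, h9]
        ring
    · obtain ⟨j, rfl⟩ := ho
      have hv : padicValNat 2 (2 * j + 1) = 0 :=
        padicValNat.eq_zero_of_not_dvd (by omega)
      obtain ⟨c, hc⟩ := nine_pow_mod_eight j
      refine ⟨72 * c ^ 2 + 18 * c + 1, ⟨36 * c ^ 2 + 9 * c, by ring⟩, ?_⟩
      have h81 : 9 ^ (2 * j + 1) = 9 * (9 ^ j) ^ 2 := by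
        rw [two_mul, pow_succ, pow_add, sq]; ring
      rw [hv, h81, hc]
      ring

theorem next_seed_from_collatz_twice (p : ℕ) (hp : Even p) :
    2 * 3 ^ (p + 2) - 1 =
      2 ^ (padicValNat 2 (p + 2) + 1 + 2) * collatzC (collatzC (2 * 3 ^ p - 1)) + 1 := by
  obtain ⟨k, rfl⟩ := hp
  have h3p : 3 ^ (k + k) = 9 ^ k := by rw [← two_mul, pow_mul]; norm_num
  obtain ⟨c, hc⟩ := nine_pow_mod_eight k
  -- first Collatz step
  have hA : collatzC (2 * 3 ^ (k + k) - 1) = 12 * c + 1 := by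
    apply collatz_of_form _ 2 _ ⟨6 * c, by ring⟩
    rw [h3p, hc]
    have : 2 * (8 * c + 1) - 1 = 16 * c + 1 := by omega
    rw [this]; ring
  rw [hA]
  -- second Collatz step
  obtain ⟨u, hu, h9⟩ := nine_pow_val (k + 1) (by omega)
  set v := padicValNat 2 (k + 1) with hvdef
  have h9' : 9 ^ (k + 1) = 72 * c + 9 := by rw [pow_succ, hc]; ring
  have hkey : 2 ^ (v + 3) * u = 72 * c + 8 := by omega
  have ht : collatzC (12 * c + 1) = u := by
    apply collatz_of_form _ (v + 2) _ hu
    have h2 : 2 * (2 ^ (v + 2) * u) = 2 * (36 * c + 4) := by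
      rw [← mul_assoc]
      have : 2 * 2 ^ (v + 2) = 2 ^ (v + 3) := by ring
      rw [this, hkey]; ring
    have := Nat.eq_of_mul_eq_mul_left (by norm_num) h2
    omega
  rw [ht]
  -- valuation of p + 2
  have hvp : padicValNat 2 (k + k + 2) = v + 1 := by
    haveI : Fact (Nat.Prime 2) := ⟨Nat.prime_two⟩
    have : k + k + 2 = 2 * (k + 1) := by ring
    rw [this, padicValNat.mul (by norm_num) (by omega), padicValNat.self (by norm_num), hvdef]
    omega
  rw [hvp]
  -- final arithmetic
  have h3p2 : 3 ^ (k + k + 2) = 9 ^ (k + 1) := by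
    have h : k + k + 2 = 2 * (k + 1) := by ring
    rw [h, pow_mul]; norm_num
  have hpow : 2 ^ (v + 1 + 1 + 2) = 2 * 2 ^ (v + 3) := by ring
  rw [h3p2, h9, hpow]
  have : 2 * (2 ^ (v + 3) * u + 1) = 2 * 2 ^ (v + 3) * u + 2 := by ring
  omega
end

section
/- For every integer t ≥ 0, define H_t = 27 + 7·Σ_{j=0}^{t−1} 2^{6j+8} (so H_0 = 27 and H_{t+1} = H_t + 7·2^{6t+8}) and let k = 3t + 2. Then H_t is odd, v₂(3·H_t + 1) = 1, and (3·H_t + 1)/2 = (Σ_{μ=1}^{k+1} 2^{2μ−1}) − 1. -/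
open Finset

def collatzH (t : ℕ) : ℕ := 27 + 7 * ∑ j ∈ range t, 2 ^ (6 * j + 8)

def twoPowOddSum (n : ℕ) : ℕ := ∑ μ ∈ Icc 1 n, 2 ^ (2 * μ - 1)

lemma nine_mul_collatzH_add_thirteen (t : ℕ) : 9 * collatzH t + 13 = 4 ^ (3 * t + 4) := by
  induction t with
  | zero => rfl
  | succ t ih =>
    have hterm : 2 ^ (6 * t + 8) = 4 ^ (3 * t + 4) := by
      rw [show 6 * t + 8 = 2 * (3 * t + 4) by ring, pow_mul]; rfl
    have hpow : 4 ^ (3 * (t + 1) + 4) = 64 * 4 ^ (3 * t + 4) := by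
      rw [show 3 * (t + 1) + 4 = 3 + (3 * t + 4) by ring, pow_add]; rfl
    unfold collatzH at ih ⊢
    rw [sum_range_succ, hterm, hpow]
    omega

lemma three_mul_twoPowOddSum_add_two (n : ℕ) : 3 * twoPowOddSum n + 2 = 2 * 4 ^ n := by
  induction n with
  | zero => rfl
  | succ n ih =>
    have hterm : 2 ^ (2 * (n + 1) - 1) = 2 * 4 ^ n := by
      rw [show 2 * (n + 1) - 1 = 2 * n + 1 by omega, pow_succ, pow_mul, mul_comm]; rfl
    unfold twoPowOddSum at ih ⊢
    rw [sum_Icc_succ_top (by omega), hterm, pow_succ]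
    omega

lemma even_twoPowOddSum (n : ℕ) : Even (twoPowOddSum n) :=
  Finset.even_sum _ fun μ hμ ↦ (Nat.even_pow' (by grind)).mpr even_two

lemma three_mul_collatzH_add_three (t : ℕ) :
    3 * collatzH t + 3 = 2 * twoPowOddSum (3 * t + 3) := by
  have hH := nine_mul_collatzH_add_thirteen t
  have hS := three_mul_twoPowOddSum_add_two (3 * t + 3)
  rw [pow_succ] at hH
  omega

lemma padicValNat_prime_mul_of_not_dvd {p m : ℕ} [Fact p.Prime] (hm : ¬p ∣ m) :
    padicValNat p (p * m) = 1 := by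
  have hm₀ : m ≠ 0 := by rintro rfl; exact hm (dvd_zero p)
  rw [padicValNat.mul (NeZero.ne p) hm₀, padicValNat_self, padicValNat.eq_zero_of_not_dvd hm]

theorem collatz_step_of_H (t : ℕ) :
    Odd (27 + 7 * ∑ j ∈ Finset.range t, 2 ^ (6 * j + 8)) ∧
    padicValNat 2 (3 * (27 + 7 * ∑ j ∈ Finset.range t, 2 ^ (6 * j + 8)) + 1) = 1 ∧
    (3 * (27 + 7 * ∑ j ∈ Finset.range t, 2 ^ (6 * j + 8)) + 1) / 2 =
      (∑ μ ∈ Finset.Icc 1 (3 * t + 2 + 1), 2 ^ (2 * μ - 1)) - 1 := by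
  change Odd (collatzH t) ∧ padicValNat 2 (3 * collatzH t + 1) = 1 ∧
    (3 * collatzH t + 1) / 2 = twoPowOddSum (3 * t + 3) - 1
  have hH := three_mul_collatzH_add_three t
  obtain ⟨m, hm⟩ := even_twoPowOddSum (3 * t + 3)
  have hstep : 3 * collatzH t + 1 = 2 * (2 * m - 1) := by omega
  refine ⟨Nat.odd_iff.mpr (by omega), ?_, by omega⟩
  rw [hstep]
  exact padicValNat_prime_mul_of_not_dvd (by omega)
end

section
/- For every integer t ≥ 0, let H_t = 27 + 7·Σ_{j=0}^{t−1} 2^{6j+8} and k = 3t + 2. Then two Collatz operations applied to H_t yield 2^{2k+1} − 1: the first step has v₂(3·H_t + 1) = 1, and writing m = (3·H_t + 1)/2, the second step has v₂(3m + 1) = 2 with (3m + 1)/4 = 2^{2k+1} − 1; that is, C(C(H_t)) = 2^{2(3t+2)+1} − 1. -/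
lemma padicValNat_two_pow_mul_of_odd (k : ℕ) {m : ℕ} (hm : Odd m) :
    padicValNat 2 (2 ^ k * m) = k := by
  rw [padicValNat.mul (pow_ne_zero k two_ne_zero) (by rintro rfl; simp at hm),
    padicValNat.prime_pow, padicValNat.eq_zero_of_not_dvd hm.not_two_dvd_nat, add_zero]

lemma collatzC_eq_of_three_mul_add_one_eq {n k m : ℕ} (h : 3 * n + 1 = 2 ^ k * m)
    (hm : Odd m) : collatzC n = m := by
  rw [collatzC, h, padicValNat_two_pow_mul_of_odd k hm,
    Nat.mul_div_cancel_left m (pow_pos two_pos k)]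

lemma sixty_three_mul_sum_range_two_pow_add (t c : ℕ) :
    63 * ∑ j ∈ Finset.range t, 2 ^ (6 * j + c) + 2 ^ c = 2 ^ (6 * t + c) := by
  induction t with
  | zero => simp
  | succ t ih =>
    rw [Finset.sum_range_succ, mul_add, add_right_comm, ih]
    ring

theorem collatz_twice_of_H (t : ℕ) :
    padicValNat 2 (3 * (27 + 7 * ∑ j ∈ Finset.range t, 2 ^ (6 * j + 8)) + 1) = 1 ∧
    padicValNat 2
      (3 * ((3 * (27 + 7 * ∑ j ∈ Finset.range t, 2 ^ (6 * j + 8)) + 1) / 2) + 1) = 2 ∧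
    (3 * ((3 * (27 + 7 * ∑ j ∈ Finset.range t, 2 ^ (6 * j + 8)) + 1) / 2) + 1) / 4 =
      2 ^ (2 * (3 * t + 2) + 1) - 1 ∧
    collatzC (collatzC (27 + 7 * ∑ j ∈ Finset.range t, 2 ^ (6 * j + 8))) =
      2 ^ (2 * (3 * t + 2) + 1) - 1 := by
  have hgeom := sixty_three_mul_sum_range_two_pow_add t 8
  set S := ∑ j ∈ Finset.range t, 2 ^ (6 * j + 8)
  set M := (3 * (27 + 7 * S) + 1) / 2
  rw [show 2 * (3 * t + 2) + 1 = 6 * t + 5 by ring]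
  have hpow : 2 ^ (6 * t + 8) = 8 * 2 ^ (6 * t + 5) := by ring
  have hfirst : 3 * (27 + 7 * S) + 1 = 2 ^ 1 * M := by omega
  have hM : Odd M := Nat.odd_iff.mpr (by omega)
  have hsecond : 3 * M + 1 = 2 ^ 2 * (2 ^ (6 * t + 5) - 1) := by omega
  have hodd : Odd (2 ^ (6 * t + 5) - 1) :=
    Nat.Even.sub_odd Nat.one_le_two_pow (Nat.even_pow.mpr ⟨even_two, by omega⟩) odd_one
  refine ⟨?_, ?_, ?_, ?_⟩
  · rw [hfirst, padicValNat_two_pow_mul_of_odd 1 hM]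
  · rw [hsecond, padicValNat_two_pow_mul_of_odd 2 hodd]
  · rw [hsecond]; omega
  · rw [collatzC_eq_of_three_mul_add_one_eq hfirst hM,
      collatzC_eq_of_three_mul_add_one_eq hsecond hodd]
end
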